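/- Let X be a normed linear space, J : X → ℝ ∪ {+∞} a lower semicontinuous functional, I : X → ℝ a functional of class C¹, and f = J + I. If u ∈ dom(f) and the Fréchet derivative I'(u) = 0, then |df|(u) = |dJ|(u). -/

import Mathlib

open Metric Set Filter
open scoped ENNReal

/-- The epigraph of `f : X → ℝ ∪ {+∞}`, as a subset of `X × ℝ`. -/
def epiSet {X : Type*} [MetricSpace X] (f : X → EReal) : Set (X × ℝ) :=
  {p | f p.1 ≤ (p.2 : EReal)}

/-- The metric on `X × ℝ`, `d((u,η),(v,μ)) = (d(u,v)² + (η−μ)²)^{1/2}`. -/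
noncomputable def distE {X : Type*} [MetricSpace X] (p q : X × ℝ) : ℝ :=
  Real.sqrt (dist p.1 q.1 ^ 2 + (p.2 - q.2) ^ 2)

/-- The open ball in `X × ℝ` with respect to `distE`. -/
def ballE {X : Type*} [MetricSpace X] (p : X × ℝ) (δ : ℝ) : Set (X × ℝ) :=
  {q | distE q p < δ}

/-- The set of admissible `σ` in the definition of the weak slope `|d G_f|(u, η)`. -/
def slopeSet {X : Type*} [MetricSpace X] (f : X → EReal) (u : X) (η : ℝ) : Set ℝ :=
  {σ | 0 ≤ σ ∧ ∃ δ : ℝ, 0 < δ ∧ ∃ H : X × ℝ → ℝ → X × ℝ,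
    ContinuousOn (fun q : (X × ℝ) × ℝ => H q.1 q.2)
      ((ballE (u, η) δ ∩ epiSet f) ×ˢ Icc 0 δ) ∧
    ∀ p ∈ ballE (u, η) δ ∩ epiSet f, ∀ t ∈ Icc (0:ℝ) δ,
      H p t ∈ epiSet f ∧ distE (H p t) p ≤ t ∧ (H p t).2 ≤ p.2 - σ * t}

/-- The weak slope `|d G_f|(u, η)` of `G_f` at `(u, η) ∈ epi f`. -/
noncomputable def slopeG {X : Type*} [MetricSpace X] (f : X → EReal) (u : X) (η : ℝ) : ℝ :=
  sSup (slopeSet f u η)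

/-- The weak slope `|df|(u)` of a lower semicontinuous `f` at `u ∈ dom f`. -/
noncomputable def wslope {X : Type*} [MetricSpace X] (f : X → EReal) (u : X) : ℝ≥0∞ :=
  if slopeG f u (f u).toReal < 1 then
    ENNReal.ofReal (slopeG f u (f u).toReal / Real.sqrt (1 - slopeG f u (f u).toReal ^ 2))
  else ⊤

/-- Admissible `σ` in the definition of the equivariant weak slope `|d_{ℤ₂} G_f|(0, η)`. -/
def slopeZ2Set {X : Type*} [NormedAddCommGroup X] [NormedSpace ℝ X]
    (f : X → EReal) (η : ℝ) : Set ℝ :=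
  {σ | 0 ≤ σ ∧ ∃ δ : ℝ, 0 < δ ∧ ∃ H : X × ℝ → ℝ → X × ℝ,
    ContinuousOn (fun q : (X × ℝ) × ℝ => H q.1 q.2)
      ((ballE ((0 : X), η) δ ∩ epiSet f) ×ˢ Icc 0 δ) ∧
    ∀ p ∈ ballE ((0 : X), η) δ ∩ epiSet f, ∀ t ∈ Icc (0:ℝ) δ,
      H p t ∈ epiSet f ∧ distE (H p t) p ≤ t ∧ (H p t).2 ≤ p.2 - σ * t ∧
      (H (-p.1, p.2) t).1 = -(H p t).1}

/-- The equivariant weak slope `|d_{ℤ₂} G_f|(0, η)`. -/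
noncomputable def slopeZ2 {X : Type*} [NormedAddCommGroup X] [NormedSpace ℝ X]
    (f : X → EReal) (η : ℝ) : ℝ :=
  sSup (slopeZ2Set f η)

/-- Condition (3.3). -/
def cond33 {X : Type*} [MetricSpace X] (f : X → EReal) : Prop :=
  ∀ (u : X) (η : ℝ), (u, η) ∈ epiSet f → f u < (η : EReal) → slopeG f u η = 1

/-- The Palais–Smale condition at level `c`. -/
def PScond {X : Type*} [MetricSpace X] (f : X → EReal) (c : ℝ) : Prop :=
  ∀ u : ℕ → X, (∀ n, f (u n) ≠ ⊤) →
    Tendsto (fun n => wslope f (u n)) atTop (nhds 0) →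
    Tendsto (fun n => f (u n)) atTop (nhds (c : EReal)) →
    ∃ (v : X) (φ : ℕ → ℕ), StrictMono φ ∧ Tendsto (fun n => u (φ n)) atTop (nhds v)

section Helpers

variable {X : Type*} [MetricSpace X]

lemma distE_nonneg (p q : X × ℝ) : 0 ≤ distE p q := Real.sqrt_nonneg _

lemma distE_sq (p q : X × ℝ) : distE p q ^ 2 = dist p.1 q.1 ^ 2 + (p.2 - q.2) ^ 2 :=
  Real.sq_sqrt (by positivity)

lemma distE_le_of_sq {p q : X × ℝ} {c : ℝ} (hc : 0 ≤ c)
    (h : dist p.1 q.1 ^ 2 + (p.2 - q.2) ^ 2 ≤ c ^ 2) : distE p q ≤ c := by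
  calc distE p q ≤ Real.sqrt (c ^ 2) := Real.sqrt_le_sqrt h
  _ = c := Real.sqrt_sq hc

lemma dist_fst_le_distE (p q : X × ℝ) : dist p.1 q.1 ≤ distE p q := by
  have h : dist p.1 q.1 ^ 2 ≤ dist p.1 q.1 ^ 2 + (p.2 - q.2) ^ 2 := by
    nlinarith [sq_nonneg (p.2 - q.2)]
  calc dist p.1 q.1 = Real.sqrt (dist p.1 q.1 ^ 2) := (Real.sqrt_sq dist_nonneg).symm
  _ ≤ distE p q := Real.sqrt_le_sqrt h

lemma abs_snd_le_distE (p q : X × ℝ) : |p.2 - q.2| ≤ distE p q := by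
  have h : (p.2 - q.2) ^ 2 ≤ dist p.1 q.1 ^ 2 + (p.2 - q.2) ^ 2 := by
    nlinarith [sq_nonneg (dist p.1 q.1)]
  calc |p.2 - q.2| = Real.sqrt ((p.2 - q.2) ^ 2) := (Real.sqrt_sq_eq_abs _).symm
  _ ≤ distE p q := Real.sqrt_le_sqrt h

-- component forms
lemma distE_sq' (p : X × ℝ) (v : X) (μ : ℝ) :
    distE p (v, μ) ^ 2 = dist p.1 v ^ 2 + (p.2 - μ) ^ 2 := distE_sq p (v, μ)

lemma distE_sq4 (v u : X) (μ η : ℝ) :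
    distE (v, μ) (u, η) ^ 2 = dist v u ^ 2 + (μ - η) ^ 2 := distE_sq (v, μ) (u, η)

lemma distE_le_of_sq4 {v u : X} {μ η c : ℝ} (hc : 0 ≤ c)
    (h : dist v u ^ 2 + (μ - η) ^ 2 ≤ c ^ 2) : distE (v, μ) (u, η) ≤ c :=
  distE_le_of_sq hc h

lemma distE_le_of_sq_left {v : X} {μ c : ℝ} {p : X × ℝ} (hc : 0 ≤ c)
    (h : dist v p.1 ^ 2 + (μ - p.2) ^ 2 ≤ c ^ 2) : distE (v, μ) p ≤ c :=
  distE_le_of_sq hc h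

lemma dist_fst_le' (p : X × ℝ) (v : X) (μ : ℝ) : dist p.1 v ≤ distE p (v, μ) :=
  dist_fst_le_distE p (v, μ)

lemma abs_snd_le' (p : X × ℝ) (v : X) (μ : ℝ) : |p.2 - μ| ≤ distE p (v, μ) :=
  abs_snd_le_distE p (v, μ)

lemma dist_le_distE4 (v u : X) (μ η : ℝ) : dist v u ≤ distE (v, μ) (u, η) :=
  dist_fst_le_distE (v, μ) (u, η)

lemma distE_self (p : X × ℝ) : distE p p = 0 := by simp [distE]

lemma zero_mem_slopeSet (f : X → EReal) (u : X) (η : ℝ) : (0:ℝ) ∈ slopeSet f u η := by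
  refine ⟨le_rfl, 1, one_pos, fun p _ => p, continuous_fst.continuousOn, ?_⟩
  intro p hp t ht
  refine ⟨hp.2, ?_, by simp⟩
  rw [distE_self]; exact ht.1

lemma mem_le_one_of_slopeSet {f : X → EReal} {u : X} {η : ℝ} (hmem : ((u, η) : X × ℝ) ∈ epiSet f)
    {σ : ℝ} (hσ : σ ∈ slopeSet f u η) : σ ≤ 1 := by
  obtain ⟨h0, δ, hδ, H, _, hH⟩ := hσ
  have hp : ((u, η) : X × ℝ) ∈ ballE (u, η) δ ∩ epiSet f := by
    refine ⟨?_, hmem⟩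
    show distE (u, η) (u, η) < δ
    rw [distE_self]; exact hδ
  obtain ⟨-, hd, hdec⟩ := hH _ hp δ ⟨hδ.le, le_rfl⟩
  have h1 : |(H (u, η) δ).2 - η| ≤ δ := le_trans (abs_snd_le' _ u η) hd
  have h2 := abs_le.1 h1
  nlinarith [h2.1, h2.2, hdec]

lemma quad_bound {d B c s e : ℝ} (hd : 0 ≤ d) (he : 0 ≤ e) (hs : 0 ≤ s)
    (h1 : d ^ 2 + B ^ 2 ≤ s ^ 2) (h2 : |c| ≤ e * d) :
    d ^ 2 + (B + c) ^ 2 ≤ ((1 + e) * s) ^ 2 := by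
  have hd2 : d ^ 2 ≤ s ^ 2 := by nlinarith [sq_nonneg B]
  have hds : d ≤ s := by nlinarith
  have hc2 : c ^ 2 ≤ (e * s) ^ 2 := by
    nlinarith [sq_abs c, abs_nonneg c, mul_le_mul_of_nonneg_left hds he]
  have hBc : B * c ≤ |B| * (e * d) := by
    calc B * c ≤ |B * c| := le_abs_self _
    _ = |B| * |c| := abs_mul _ _
    _ ≤ |B| * (e * d) := mul_le_mul_of_nonneg_left h2 (abs_nonneg B)
  have h3 : 2 * (|B| * (e * d)) ≤ e * (B ^ 2 + d ^ 2) := by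
    nlinarith [sq_nonneg (|B| - d), sq_abs B, he]
  have h4 : e * (B ^ 2 + d ^ 2) ≤ e * s ^ 2 := by nlinarith
  nlinarith [sq_abs B, mul_nonneg he (sq_nonneg s)]

end Helpers

set_option maxHeartbeats 2000000 in
lemma key_le {X : Type*} [NormedAddCommGroup X] [NormedSpace ℝ X]
    (J : X → EReal) (hbot : ∀ x, J x ≠ ⊥)
    (I : X → ℝ) (hI : ContDiff ℝ 1 I)
    (u : X) (hI' : fderiv ℝ I u = 0) (η : ℝ) (hη : J u ≤ (η : EReal)) :
    slopeG J u η ≤ slopeG (fun x => J x + (I x : EReal)) u (η + I u) := by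
  set f : X → EReal := fun x => J x + (I x : EReal) with hfdef
  have hmemJ : ((u, η) : X × ℝ) ∈ epiSet J := hη
  have hmemf : ((u, η + I u) : X × ℝ) ∈ epiSet f := by
    show J u + (I u : EReal) ≤ ((η + I u : ℝ) : EReal)
    rw [EReal.coe_add]
    exact add_le_add hη le_rfl
  have hbddf : BddAbove (slopeSet f u (η + I u)) :=
    ⟨1, fun σ hσ => mem_le_one_of_slopeSet hmemf hσ⟩
  have hne : (slopeSet J u η).Nonempty := ⟨0, zero_mem_slopeSet _ _ _⟩
  have hSup0 : (0:ℝ) ≤ slopeG f u (η + I u) := le_csSup hbddf (zero_mem_slopeSet _ _ _)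
  show sSup (slopeSet J u η) ≤ slopeG f u (η + I u)
  refine csSup_le hne ?_
  intro σ hσmem
  have hσ1 : σ ≤ 1 := mem_le_one_of_slopeSet hmemJ hσmem
  have hσ0 : 0 ≤ σ := hσmem.1
  have main : ∀ e : ℝ, 0 < e → e < 1 → σ - 2 * e ≤ slopeG f u (η + I u) := by
    intro e he0 he1
    rcases lt_or_ge σ e with hcase | hcase
    · linarith
    obtain ⟨-, δ, hδ, H, Hcont, Hprop⟩ := hσmem
    have he1' : (0:ℝ) < 1 + e := by linarith
    -- Lipschitz radius
    obtain ⟨r, hr0, hrI⟩ : ∃ r > 0, ∀ x ∈ Metric.ball u r, ‖fderiv ℝ I x‖ ≤ e := by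
      have hc : Continuous (fderiv ℝ I) := hI.continuous_fderiv one_ne_zero
      have ht : Filter.Tendsto (fun x => ‖fderiv ℝ I x‖) (nhds u) (nhds 0) := by
        have h := (hc.norm.tendsto u); rwa [hI', norm_zero] at h
      have h2 : ∀ᶠ x in nhds u, ‖fderiv ℝ I x‖ < e := ht.eventually_lt_const he0
      rw [Metric.eventually_nhds_iff] at h2
      obtain ⟨r, hr0, hr⟩ := h2
      exact ⟨r, hr0, fun x hx => (hr (by simpa [Metric.mem_ball] using hx)).le⟩
    have hLip : ∀ x ∈ Metric.ball u r, ∀ y ∈ Metric.ball u r, |I x - I y| ≤ e * dist x y := by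
      intro x hx y hy
      have h := Convex.norm_image_sub_le_of_norm_fderiv_le (f := I) (C := e)
        (s := Metric.ball u r) (𝕜 := ℝ)
        (fun z _ => (hI.differentiable one_ne_zero).differentiableAt)
        (fun z hz => hrI z hz) (convex_ball u r) hy hx
      rw [dist_eq_norm]
      simpa [Real.norm_eq_abs] using h
    set δ₂ : ℝ := min (δ / (1 + e)) (r / 3) with hδ₂def
    have hδ₂ : 0 < δ₂ := lt_min (by positivity) (by positivity)
    have hδ₂δ : δ₂ * (1 + e) ≤ δ := by
      have h := mul_le_mul_of_nonneg_right (min_le_left (δ / (1 + e)) (r / 3)) he1'.le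
      calc δ₂ * (1 + e) ≤ (δ / (1 + e)) * (1 + e) := h
      _ = δ := by field_simp
    have hδ₂r : δ₂ ≤ r / 3 := min_le_right _ _
    have hδ₂δ' : δ₂ ≤ δ := by
      have hexp : δ₂ * (1 + e) = δ₂ + δ₂ * e := by ring
      have h9 := mul_nonneg hδ₂.le he0.le
      linarith
    -- the mapping estimate
    have hmap : ∀ p ∈ ballE ((u : X), η + I u) δ₂ ∩ epiSet f,
        ((p.1, p.2 - I p.1) : X × ℝ) ∈ ballE ((u : X), η) δ ∩ epiSet J ∧ dist p.1 u < δ₂ := by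
      rintro ⟨v, μ⟩ ⟨hball, hepi⟩
      have hdE : distE ((v, μ) : X × ℝ) (u, η + I u) < δ₂ := hball
      have hdv : dist v u < δ₂ := lt_of_le_of_lt (dist_le_distE4 v u μ (η + I u)) hdE
      have hvball : v ∈ Metric.ball u r := by
        rw [Metric.mem_ball]; linarith
      have huball : u ∈ Metric.ball u r := Metric.mem_ball_self hr0
      have hIvu : |I u - I v| ≤ e * dist v u := by
        have h := hLip u huball v hvball
        rwa [dist_comm] at h
      have hepiJ : J v ≤ ((μ - I v : ℝ) : EReal) := by
        have h1 : J v + (I v : EReal) ≤ (μ : EReal) := hepi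
        have hvt : J v ≠ ⊤ := by
          intro h
          rw [h, EReal.top_add_coe] at h1
          exact (EReal.coe_lt_top μ).not_ge h1
        lift J v to ℝ using ⟨hvt, hbot v⟩ with a ha
        rw [← EReal.coe_add, EReal.coe_le_coe_iff] at h1
        rw [EReal.coe_le_coe_iff]
        linarith
      refine ⟨⟨?_, hepiJ⟩, hdv⟩
      show distE ((v, μ - I v) : X × ℝ) (u, η) < δ
      have hc : distE ((v, μ - I v) : X × ℝ) (u, η) ≤ (1 + e) * distE ((v, μ) : X × ℝ) (u, η + I u) := by
        refine distE_le_of_sq4 (mul_nonneg he1'.le (distE_nonneg _ _)) ?_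
        have h2 : distE ((v, μ) : X × ℝ) (u, η + I u) ^ 2 = dist v u ^ 2 + (μ - (η + I u)) ^ 2 :=
          distE_sq4 v u μ (η + I u)
        have hqb := quad_bound (B := μ - (η + I u)) (c := I u - I v)
          (dist_nonneg (x := v) (y := u)) he0.le
          (distE_nonneg ((v, μ) : X × ℝ) ((u, η + I u) : X × ℝ)) (le_of_eq h2.symm) hIvu
        calc dist v u ^ 2 + ((μ - I v) - η) ^ 2
            = dist v u ^ 2 + ((μ - (η + I u)) + (I u - I v)) ^ 2 := by ring
          _ ≤ ((1 + e) * distE ((v, μ) : X × ℝ) (u, η + I u)) ^ 2 := hqb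
      calc distE ((v, μ - I v) : X × ℝ) (u, η)
          ≤ (1 + e) * distE ((v, μ) : X × ℝ) (u, η + I u) := hc
        _ < (1 + e) * δ₂ := mul_lt_mul_of_pos_left hdE he1'
        _ ≤ δ := by linarith [hδ₂δ]
    set σ' : ℝ := (σ - e) / (1 + e) with hσ'def
    have hσ'0 : 0 ≤ σ' := div_nonneg (by linarith) he1'.le
    have hmem2 : σ' ∈ slopeSet f u (η + I u) := by
      refine ⟨hσ'0, δ₂, hδ₂,
        fun p t => (((H (p.1, p.2 - I p.1) (t / (1 + e))).1,
          (H (p.1, p.2 - I p.1) (t / (1 + e))).2 + I (H (p.1, p.2 - I p.1) (t / (1 + e))).1) : X × ℝ),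
        ?_, ?_⟩
      · have hIc : Continuous I := hI.continuous
        have c1 : Continuous (fun q : (X × ℝ) × ℝ =>
            ((((q.1.1, q.1.2 - I q.1.1) : X × ℝ), q.2 / (1 + e)) : (X × ℝ) × ℝ)) := by fun_prop
        have c3 : Continuous (fun p : X × ℝ => ((p.1, p.2 + I p.1) : X × ℝ)) := by fun_prop
        have hmaps : Set.MapsTo (fun q : (X × ℝ) × ℝ =>
              ((((q.1.1, q.1.2 - I q.1.1) : X × ℝ), q.2 / (1 + e)) : (X × ℝ) × ℝ))
            ((ballE ((u : X), η + I u) δ₂ ∩ epiSet f) ×ˢ Set.Icc 0 δ₂)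
            ((ballE ((u : X), η) δ ∩ epiSet J) ×ˢ Set.Icc 0 δ) := by
          rintro ⟨p, t⟩ ⟨hp, ht⟩
          refine ⟨(hmap p hp).1, ?_, ?_⟩
          · exact div_nonneg ht.1 he1'.le
          · calc t / (1 + e) ≤ t := div_le_self ht.1 (by linarith)
              _ ≤ δ₂ := ht.2
              _ ≤ δ := hδ₂δ'
        exact c3.comp_continuousOn (Hcont.comp c1.continuousOn hmaps)
      · rintro p hp t ht
        obtain ⟨hq, hdv⟩ := hmap p hp
        have hs0 : 0 ≤ t / (1 + e) := div_nonneg ht.1 he1'.le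
        have hst : t / (1 + e) ≤ t := div_le_self ht.1 (by linarith)
        have hsδ : t / (1 + e) ∈ Set.Icc (0:ℝ) δ := ⟨hs0, le_trans (hst.trans ht.2) hδ₂δ'⟩
        obtain ⟨hepi', hdist', hdec'⟩ := Hprop (p.1, p.2 - I p.1) hq (t / (1 + e)) hsδ
        have hd1 : dist (H (p.1, p.2 - I p.1) (t / (1 + e))).1 p.1 ≤ t / (1 + e) :=
          le_trans (dist_fst_le' _ p.1 (p.2 - I p.1)) hdist'
        have hsq : dist (H (p.1, p.2 - I p.1) (t / (1 + e))).1 p.1 ^ 2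
            + ((H (p.1, p.2 - I p.1) (t / (1 + e))).2 - (p.2 - I p.1)) ^ 2 ≤ (t / (1 + e)) ^ 2 := by
          have h7 := pow_le_pow_left₀ (distE_nonneg (H (p.1, p.2 - I p.1) (t / (1 + e)))
            ((p.1, p.2 - I p.1) : X × ℝ)) hdist' 2
          rwa [distE_sq' _ p.1 (p.2 - I p.1)] at h7
        have hwball : (H (p.1, p.2 - I p.1) (t / (1 + e))).1 ∈ Metric.ball u r := by
          rw [Metric.mem_ball]
          have htriangle := dist_triangle (H (p.1, p.2 - I p.1) (t / (1 + e))).1 p.1 u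
          have h8 : dist (H (p.1, p.2 - I p.1) (t / (1 + e))).1 p.1 ≤ δ₂ :=
            le_trans hd1 (hst.trans ht.2)
          linarith
        have hpball : p.1 ∈ Metric.ball u r := by rw [Metric.mem_ball]; linarith
        have hIw : |I (H (p.1, p.2 - I p.1) (t / (1 + e))).1 - I p.1|
            ≤ e * dist (H (p.1, p.2 - I p.1) (t / (1 + e))).1 p.1 :=
          hLip _ hwball p.1 hpball
        have ht' : t = (1 + e) * (t / (1 + e)) := by field_simp
        refine ⟨?_, ?_, ?_⟩
        · show J (H (p.1, p.2 - I p.1) (t / (1 + e))).1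
              + ((I (H (p.1, p.2 - I p.1) (t / (1 + e))).1 : ℝ) : EReal)
            ≤ (((H (p.1, p.2 - I p.1) (t / (1 + e))).2
              + I (H (p.1, p.2 - I p.1) (t / (1 + e))).1 : ℝ) : EReal)
          rw [EReal.coe_add]
          exact add_le_add hepi' le_rfl
        · refine distE_le_of_sq_left ht.1 ?_
          have hqb := quad_bound (B := (H (p.1, p.2 - I p.1) (t / (1 + e))).2 - (p.2 - I p.1))
            (c := I (H (p.1, p.2 - I p.1) (t / (1 + e))).1 - I p.1)
            dist_nonneg he0.le hs0 hsq hIw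
          calc dist (H (p.1, p.2 - I p.1) (t / (1 + e))).1 p.1 ^ 2
              + ((H (p.1, p.2 - I p.1) (t / (1 + e))).2
                + I (H (p.1, p.2 - I p.1) (t / (1 + e))).1 - p.2) ^ 2
              = dist (H (p.1, p.2 - I p.1) (t / (1 + e))).1 p.1 ^ 2
              + (((H (p.1, p.2 - I p.1) (t / (1 + e))).2 - (p.2 - I p.1))
                + (I (H (p.1, p.2 - I p.1) (t / (1 + e))).1 - I p.1)) ^ 2 := by ring
            _ ≤ ((1 + e) * (t / (1 + e))) ^ 2 := hqb
            _ = t ^ 2 := by rw [← ht']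
        · show (H (p.1, p.2 - I p.1) (t / (1 + e))).2
              + I (H (p.1, p.2 - I p.1) (t / (1 + e))).1 ≤ p.2 - σ' * t
          have hσt : σ' * t = (σ - e) * (t / (1 + e)) := by
            rw [hσ'def]; field_simp
          have h5 : I (H (p.1, p.2 - I p.1) (t / (1 + e))).1 - I p.1 ≤ e * (t / (1 + e)) := by
            have h6 := le_trans (le_abs_self _) hIw
            nlinarith
          linarith [hdec']
    have hle : σ' ≤ slopeG f u (η + I u) := le_csSup hbddf hmem2
    have h7 : σ - 2 * e ≤ σ' := by
      rw [hσ'def, le_div_iff₀ he1']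
      nlinarith
    linarith
  refine le_of_forall_pos_le_add ?_
  intro ε hε
  have h := main (min (ε / 2) (1 / 2)) (by positivity)
    (lt_of_le_of_lt (min_le_right _ _) (by norm_num))
  have h1 : min (ε / 2) (1 / 2) ≤ ε / 2 := min_le_left _ _
  linarith

/-- **Proposition 3.7 (c).** For `f = J + I` with `J` lower semicontinuous and `I` of class
`C¹`, if `u ∈ dom f` and `I'(u) = 0` then `|df|(u) = |dJ|(u)`. -/
theorem statement3 {X : Type*} [NormedAddCommGroup X] [NormedSpace ℝ X]
    (J : X → EReal) (hJ : LowerSemicontinuous J) (hbot : ∀ x, J x ≠ ⊥)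
    (I : X → ℝ) (hI : ContDiff ℝ 1 I)
    (f : X → EReal) (hf : ∀ x, f x = J x + (I x : EReal))
    (u : X) (hu : f u ≠ ⊤) (hI' : fderiv ℝ I u = 0) :
    wslope f u = wslope J u := by
  have hJtop : J u ≠ ⊤ := by
    intro h
    apply hu
    rw [hf u, h, EReal.top_add_coe]
  obtain ⟨a, ha⟩ : ∃ a : ℝ, J u = (a : EReal) :=
    ⟨(J u).toReal, (EReal.coe_toReal hJtop (hbot u)).symm⟩
  have hfu : f u = ((a + I u : ℝ) : EReal) := by
    rw [hf u, ha, EReal.coe_add]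
  have hfeq : f = fun x => J x + (I x : EReal) := funext hf
  have hbotf : ∀ x, f x ≠ ⊥ := by
    intro x h
    rw [hf x, EReal.add_eq_bot_iff] at h
    rcases h with h | h
    · exact hbot x h
    · exact EReal.coe_ne_bot _ h
  have step1 : slopeG J u a ≤ slopeG f u (a + I u) := by
    rw [hfeq]
    exact key_le J hbot I hI u hI' a ha.le
  have hfd' : fderiv ℝ (fun x => -I x) u = 0 := by
    rw [fderiv_fun_neg, hI', neg_zero]
  have step2 : slopeG f u (a + I u) ≤
      slopeG (fun x => f x + ((-I x : ℝ) : EReal)) u ((a + I u) + -I u) :=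
    key_le f hbotf (fun x => -I x) hI.neg u hfd' (a + I u) hfu.le
  have hJeq : (fun x => f x + ((-I x : ℝ) : EReal)) = J := by
    funext x
    rw [hf x, EReal.coe_neg, ← sub_eq_add_neg]
    exact EReal.add_sub_cancel_right
  have heq : slopeG f u (a + I u) = slopeG J u a := by
    refine le_antisymm ?_ step1
    have h := step2
    rw [hJeq] at h
    have h2 : (a + I u) + -I u = a := by ring
    rwa [h2] at h
  have htf : (f u).toReal = a + I u := by rw [hfu, EReal.toReal_coe]
  have htJ : (J u).toReal = a := by rw [ha, EReal.toReal_coe]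
  simp only [wslope, htf, htJ, heq]
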